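/- Let X be a Banach space, P a bounded operator on X, and suppose X decomposes as a direct sum of a one-dimensional subspace spanned by a vector e with P e = e, and a closed P-invariant subspace X₀ on which ‖P^N restricted to X₀‖ ≤ τ < 1 for some integer N ≥ 1. Then every ζ ∈ ℂ with |ζ − 1| = ρ, where 0 < ρ < 1 and (1 − ρ)^N > τ, lies in the resolvent set of P. -/

import Mathlib

/-!
On the line `span {e}` the operator `ζ • 1 - P` acts as the nonzero scalar `ζ - 1`. On `X₀` it is
invertible because `‖ζ‖ ≥ |1 - ρ|`, so `‖ζ‖ ^ N > τ ≥ ‖(P|X₀) ^ N‖`, while `ζ ^ N` would lie in the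
spectrum of `(P|X₀) ^ N` if `ζ` lay in that of `P|X₀`. Both summands being invariant, `ζ • 1 - P` is
bijective, hence invertible by the open mapping theorem.
-/

open Function

theorem Module.End.isUnit_of_isCompl_of_isUnit_restrict {R M : Type*} [Ring R] [AddCommGroup M]
    [Module R M] {p q : Submodule R M} (hpq : IsCompl p q) {f : Module.End R M}
    (hp : ∀ x ∈ p, f x ∈ p) (hq : ∀ x ∈ q, f x ∈ q)
    (hfp : IsUnit (f.restrict hp)) (hfq : IsUnit (f.restrict hq)) : IsUnit f := by
  rw [Module.End.isUnit_iff] at hfp hfq ⊢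
  let e := p.prodEquivOfIsCompl q hpq
  have hconj : f ∘ e = e ∘ Prod.map (f.restrict hp) (f.restrict hq) := by
    funext y
    simp [e, Submodule.coe_prodEquivOfIsCompl']
  rw [← Bijective.of_comp_iff f e.bijective, hconj]
  exact e.bijective.comp (hfp.prodMap hfq)

theorem Module.End.apply_mem_span_singleton {R M : Type*} [CommSemiring R] [AddCommMonoid M]
    [Module R M] {f : Module.End R M} {e : M} {c : R} (hfe : f e = c • e) :
    ∀ x ∈ R ∙ e, f x ∈ R ∙ e := by
  intro x hx
  obtain ⟨a, rfl⟩ := Submodule.mem_span_singleton.mp hx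
  rw [map_smul, hfe, smul_comm]
  exact Submodule.smul_mem _ _ hx

theorem Module.End.isUnit_restrict_span_singleton {K M : Type*} [Field K] [AddCommGroup M]
    [Module K M] {f : Module.End K M} {e : M} {c : K} (hc : c ≠ 0) (hfe : f e = c • e)
    (h : ∀ x ∈ K ∙ e, f x ∈ K ∙ e) : IsUnit (f.restrict h) := by
  have : f.restrict h = algebraMap K _ c := by
    ext ⟨x, hx⟩
    obtain ⟨a, rfl⟩ := Submodule.mem_span_singleton.mp hx
    simp [hfe, smul_comm a c]
  exact this ▸ (isUnit_iff_ne_zero.mpr hc).map _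

theorem ContinuousLinearMap.coe_restrict_pow_apply {𝕜 E : Type*} [NontriviallyNormedField 𝕜]
    [NormedAddCommGroup E] [NormedSpace 𝕜 E] {f : E →L[𝕜] E} {p : Submodule 𝕜 E}
    (hf : ∀ x ∈ p, f x ∈ p) (n : ℕ) (x : p) : (((f.restrict hf) ^ n) x : E) = (f ^ n) x := by
  induction n generalizing x with
  | zero => rfl
  | succ n ih => exact ih (f.restrict hf x)

theorem ContinuousLinearMap.norm_restrict_pow_le {𝕜 E : Type*} [NontriviallyNormedField 𝕜]
    [NormedAddCommGroup E] [NormedSpace 𝕜 E] {f : E →L[𝕜] E} {p : Submodule 𝕜 E}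
    (hf : ∀ x ∈ p, f x ∈ p) {n : ℕ} {C : ℝ} (hC : 0 ≤ C)
    (h : ∀ x ∈ p, ‖(f ^ n) x‖ ≤ C * ‖x‖) : ‖(f.restrict hf) ^ n‖ ≤ C :=
  opNorm_le_bound _ hC fun x ↦ by
    simpa only [Submodule.coe_norm, coe_restrict_pow_apply] using h x x.2

theorem ContinuousLinearMap.isUnit_smul_one_sub_of_norm_pow_lt {𝕜 E : Type*}
    [NontriviallyNormedField 𝕜] [NormedAddCommGroup E] [NormedSpace 𝕜 E] [CompleteSpace E]
    (A : E →L[𝕜] E) {ζ : 𝕜} {n : ℕ} (h : ‖A ^ n‖ < ‖ζ‖ ^ n) : IsUnit (ζ • 1 - A) := by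
  by_contra hζ
  have hmem : ζ ^ n ∈ spectrum 𝕜 (A ^ n) := by
    refine spectrum.pow_mem_pow A n ?_
    rwa [spectrum.mem_iff, Algebra.algebraMap_eq_smul_one]
  have := (spectrum.norm_le_norm_mul_of_mem hmem).trans
    (mul_le_of_le_one_right (norm_nonneg _) norm_id_le)
  rw [norm_pow] at this
  exact this.not_gt h

theorem resolvent_set_from_spectral_splitting_general {X : Type*} [NormedAddCommGroup X]
    [NormedSpace ℂ X] [CompleteSpace X]
    (e : X) (X₀ : Submodule ℂ X) (hclosed : IsClosed (X₀ : Set X))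
    (hcompl : IsCompl (Submodule.span ℂ {e}) X₀)
    (P : X →L[ℂ] X) (hPe : P e = e) (hPX₀ : ∀ x ∈ X₀, P x ∈ X₀)
    (N : ℕ) (τ : ℝ) (hτ0 : 0 < τ)
    (hcontr : ∀ x ∈ X₀, ‖(P ^ N) x‖ ≤ τ * ‖x‖)
    (ρ : ℝ) (hρ0 : 0 < ρ) (hρτ : τ < (1 - ρ) ^ N) :
    ∀ ζ : ℂ, ‖ζ - 1‖ = ρ → IsUnit (ζ • (1 : X →L[ℂ] X) - P) := by
  intro ζ hζ
  have : CompleteSpace X₀ := hclosed.completeSpace_coe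
  have hζ1 : ζ - 1 ≠ 0 := by
    rintro h
    rw [h, norm_zero] at hζ
    exact hρ0.ne hζ
  have hτζ : τ < ‖ζ‖ ^ N := by
    have : |1 - ρ| ≤ ‖ζ‖ := by
      simpa [← hζ, abs_sub_comm] using abs_norm_sub_norm_le (ζ - 1) (-1)
    calc τ < (1 - ρ) ^ N := hρτ
      _ ≤ |1 - ρ| ^ N := by rw [← abs_pow]; exact le_abs_self _
      _ ≤ ‖ζ‖ ^ N := pow_le_pow_left₀ (abs_nonneg _) this N
  have hTe : (ζ • 1 - P) e = (ζ - 1) • e := by simp [hPe, sub_smul]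
  have hTX₀ : ∀ x ∈ X₀, (ζ • 1 - P) x ∈ X₀ :=
    fun x hx ↦ X₀.sub_mem (X₀.smul_mem ζ hx) (hPX₀ x hx)
  rw [ContinuousLinearMap.isUnit_iff_isUnit_toLinearMap]
  refine Module.End.isUnit_of_isCompl_of_isUnit_restrict hcompl
    (Module.End.apply_mem_span_singleton hTe) hTX₀
    (Module.End.isUnit_restrict_span_singleton hζ1 hTe _) ?_
  exact ContinuousLinearMap.isUnit_iff_isUnit_toLinearMap.mp <|
    (P.restrict hPX₀).isUnit_smul_one_sub_of_norm_pow_lt <|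
      (P.norm_restrict_pow_le hPX₀ hτ0.le hcontr).trans_lt hτζ

/-- Resolvent set from a spectral splitting: if `X = span{e} ⊕ X₀` (topological
direct sum with `X₀` closed), `P e = e`, `P(X₀) ⊆ X₀`, and `‖(P|_{X₀})^N‖ ≤ τ < 1`,
then every `ζ` with `|ζ - 1| = ρ`, `0 < ρ < 1` and `(1 - ρ)^N > τ`, lies in the
resolvent set of `P`. -/
theorem resolvent_set_from_spectral_splitting {X : Type*} [NormedAddCommGroup X]
    [NormedSpace ℂ X] [CompleteSpace X]
    (e : X) (he : e ≠ 0) (X₀ : Submodule ℂ X) (hclosed : IsClosed (X₀ : Set X))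
    (hcompl : IsCompl (Submodule.span ℂ {e}) X₀)
    (P : X →L[ℂ] X) (hPe : P e = e) (hPX₀ : ∀ x ∈ X₀, P x ∈ X₀)
    (N : ℕ) (hN : 1 ≤ N) (τ : ℝ) (hτ0 : 0 < τ) (hτ1 : τ < 1)
    (hcontr : ∀ x ∈ X₀, ‖(P ^ N) x‖ ≤ τ * ‖x‖)
    (ρ : ℝ) (hρ0 : 0 < ρ) (hρ1 : ρ < 1) (hρτ : τ < (1 - ρ) ^ N) :
    ∀ ζ : ℂ, ‖ζ - 1‖ = ρ → IsUnit (ζ • (1 : X →L[ℂ] X) - P) :=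
  resolvent_set_from_spectral_splitting_general e X₀ hclosed hcompl P hPe hPX₀ N τ hτ0 hcontr ρ hρ0
    hρτ
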